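/- Let C be a conilpotent coaugmented coalgebra over a field k, M a left C-comodule, and f: M → C ⊗_k U a morphism of left C-comodules into a cofree comodule. Then f is injective if and only if the induced map H⁰(C, f): H⁰(C, M) → U is injective. -/

import Mathlib

/-!
On `H⁰(C, M)` the coaction is `m ↦ g ⊗ m`, hence a comodule map into `C ⊗ U` sends
`m ∈ H⁰(C, M)` to `g ⊗ H⁰(C, f)(m)`; this gives the easy direction.

Conversely, `ker f` is a subcomodule. If `x ≠ 0` lies in it, conilpotency gives
`(Φₙ ⊗ id)(ρ x) = 0` for some `n`, and coassociativity writes `(Φₙ₊₁ ⊗ id) ∘ ρ` as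
`(id ⊗ (Φₙ ⊗ id) ∘ ρ)` applied to the reduced coaction. As tensoring over a field is exact,
a nonzero reduced coaction `t ∈ C₊ ⊗ ker f` killed by `id ⊗ (Φₙ ⊗ id) ∘ ρ` produces a nonzero
element of `ker f` killed by `(Φₙ ⊗ id) ∘ ρ`. Descending in `n` ends with a nonzero element of
`ker f ∩ H⁰(C, M)`, which `H⁰(C, f)` kills.
-/

open TensorProduct

noncomputable section

/-- The image of the coaugmentation `k → C`: the line spanned by the coaugmentation
point `g`. -/
def Caug (k : Type) [Field k] (C : Type) [AddCommGroup C] [Module k C] (g : C) :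
    Submodule k C := Submodule.span k {g}

/-- The tensor powers `C₊^{⊗(m+1)}` of the coaugmentation cokernel `C₊ = C/k`. -/
def Tp (k : Type) [Field k] (C : Type) [AddCommGroup C] [Module k C] (g : C) :
    ℕ → ModuleCat k
  | 0 => ModuleCat.of k (C ⧸ Caug k C g)
  | m + 1 => ModuleCat.of k ((C ⧸ Caug k C g) ⊗[k] (Tp k C g m))

/-- The iterated comultiplication map `C → C₊^{⊗(m+1)}` of a coaugmented coalgebra. -/
def Phi (k : Type) [Field k] (C : Type) [AddCommGroup C] [Module k C] [Coalgebra k C]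
    (g : C) : ∀ m : ℕ, C →ₗ[k] Tp k C g m
  | 0 => (Caug k C g).mkQ
  | m + 1 => (TensorProduct.map (Caug k C g).mkQ (Phi k C g m)).comp
      (Coalgebra.comul (R := k))

/-- The reduced coaction `M → C₊ ⊗ M` of a left `C`-comodule `(M, ρ)`; its kernel is
`H⁰(C, M)`, the maximal subcomodule of `M` with trivial coaction. -/
def redCoact (k : Type) [Field k] (C : Type) [AddCommGroup C] [Module k C]
    (g : C) (M : Type) [AddCommGroup M] [Module k M] (ρ : M →ₗ[k] C ⊗[k] M) :
    M →ₗ[k] (C ⧸ Caug k C g) ⊗[k] M :=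
  (LinearMap.rTensor M (Caug k C g).mkQ).comp ρ

/-- The coaction of `C` on the cofree left `C`-comodule `C ⊗ U`. -/
def cofreeCoact (k : Type) [Field k] (C : Type) [AddCommGroup C] [Module k C]
    [Coalgebra k C] (U : Type) [AddCommGroup U] [Module k U] :
    C ⊗[k] U →ₗ[k] C ⊗[k] (C ⊗[k] U) :=
  (TensorProduct.assoc k C C U).toLinearMap.comp
    (LinearMap.rTensor U (Coalgebra.comul (R := k)))

/-- The map `C ⊗ U → U` given by `counit ⊗ id` followed by `k ⊗ U ≅ U`; it identifies
`H⁰(C, C ⊗ U)` with `U`. -/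
def cofreeProj (k : Type) [Field k] (C : Type) [AddCommGroup C] [Module k C]
    [Coalgebra k C] (U : Type) [AddCommGroup U] [Module k U] : C ⊗[k] U →ₗ[k] U :=
  (TensorProduct.lid k U).toLinearMap.comp
    (LinearMap.rTensor U (Coalgebra.counit (R := k) (A := C)))

theorem LinearMap.ker_inf_ker_ne_bot_of_lTensor {k Q M N P : Type} [Field k]
    [AddCommGroup Q] [Module k Q] [AddCommGroup M] [Module k M]
    [AddCommGroup N] [Module k N] [AddCommGroup P] [Module k P]
    {f : M →ₗ[k] N} {h : M →ₗ[k] P} {t : Q ⊗[k] M} (ht : t ≠ 0)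
    (hft : f.lTensor Q t = 0) (hht : h.lTensor Q t = 0) : ker f ⊓ ker h ≠ ⊥ := by
  rw [← LinearMap.ker_prod]
  intro hker
  have hprod : (TensorProduct.prodRight k k Q N P).toLinearMap ∘ₗ (f.prod h).lTensor Q
      = (f.lTensor Q).prod (h.lTensor Q) := TensorProduct.ext' fun _ _ => rfl
  refine ht (Module.Flat.lTensor_preserves_injective_linearMap _ (ker_eq_bot.1 hker) ?_)
  apply (TensorProduct.prodRight k k Q N P).injective
  rw [map_zero, map_zero]
  exact (LinearMap.congr_fun hprod t).trans (Prod.ext hft hht)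

section Conilpotent

variable {k C : Type} [Field k] [AddCommGroup C] [Module k C] [Coalgebra k C] {g : C}

variable (k C g) in
def redComul (hg1 : Coalgebra.comul (R := k) g = g ⊗ₜ[k] g) :
    (C ⧸ Caug k C g) →ₗ[k] (C ⧸ Caug k C g) ⊗[k] (C ⧸ Caug k C g) :=
  (Caug k C g).liftQ (TensorProduct.map (Caug k C g).mkQ (Caug k C g).mkQ ∘ₗ
      Coalgebra.comul (R := k)) <| by
    rw [Caug, Submodule.span_singleton_le_iff_mem, LinearMap.mem_ker, LinearMap.comp_apply,
      hg1, TensorProduct.map_tmul, Submodule.mkQ_apply,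
      (Submodule.Quotient.mk_eq_zero _).2 (Submodule.mem_span_singleton_self g),
      TensorProduct.zero_tmul]

variable (k C g) in
def Tp.succMap (hg1 : Coalgebra.comul (R := k) g = g ⊗ₜ[k] g) :
    ∀ m : ℕ, Tp k C g m →ₗ[k] Tp k C g (m + 1)
  | 0 => redComul k C g hg1
  | m + 1 => (Tp.succMap hg1 m).lTensor (C ⧸ Caug k C g)

theorem Phi_succ_eq_comp (hg1 : Coalgebra.comul (R := k) g = g ⊗ₜ[k] g) :
    ∀ m : ℕ, Phi k C g (m + 1) = Tp.succMap k C g hg1 m ∘ₗ Phi k C g m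
  | 0 => rfl
  | m + 1 => by
    change TensorProduct.map _ (Phi k C g (m + 1)) ∘ₗ _ =
      LinearMap.lTensor _ (Tp.succMap k C g hg1 m) ∘ₗ TensorProduct.map _ (Phi k C g m) ∘ₗ _
    rw [Phi_succ_eq_comp hg1 m, ← LinearMap.comp_assoc, LinearMap.lTensor_comp_map]

theorem Phi_apply_eq_zero_of_le (hg1 : Coalgebra.comul (R := k) g = g ⊗ₜ[k] g) {m n : ℕ}
    (hmn : m ≤ n) {c : C} (hc : Phi k C g m c = 0) : Phi k C g n c = 0 := by
  induction n, hmn using Nat.le_induction with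
  | base => exact hc
  | succ n _ ih => rw [Phi_succ_eq_comp hg1, LinearMap.comp_apply, ih, map_zero]

open Filter in
theorem eventually_rTensor_Phi_eq_zero (hg1 : Coalgebra.comul (R := k) g = g ⊗ₜ[k] g)
    (hconil : ∀ c : C, ∃ m, Phi k C g m c = 0) {M : Type} [AddCommGroup M] [Module k M]
    (t : C ⊗[k] M) : ∀ᶠ n in atTop, (Phi k C g n).rTensor M t = 0 := by
  induction t using TensorProduct.induction_on with
  | zero => exact .of_forall fun _ => map_zero _
  | tmul c x =>
    obtain ⟨m, hm⟩ := hconil c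
    filter_upwards [eventually_ge_atTop m] with n hn
    rw [LinearMap.rTensor_tmul, Phi_apply_eq_zero_of_le hg1 hn hm, TensorProduct.zero_tmul]
  | add t₁ t₂ h₁ h₂ =>
    filter_upwards [h₁, h₂] with n hn₁ hn₂
    rw [map_add, hn₁, hn₂, add_zero]

end Conilpotent

section Comodule

variable {k C : Type} [Field k] [AddCommGroup C] [Module k C] {g : C}
variable {M : Type} [AddCommGroup M] [Module k M] {ρ : M →ₗ[k] C ⊗[k] M}

theorem lTensor_comp_redCoact {N : Type} [AddCommGroup N] [Module k N]
    {σ : N →ₗ[k] C ⊗[k] N} {f : M →ₗ[k] N} (hf : f.lTensor C ∘ₗ ρ = σ ∘ₗ f) :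
    f.lTensor _ ∘ₗ redCoact k C g M ρ = redCoact k C g N σ ∘ₗ f := by
  rw [redCoact, redCoact, ← LinearMap.comp_assoc, LinearMap.lTensor_comp_rTensor,
    ← LinearMap.rTensor_comp_lTensor, LinearMap.comp_assoc, hf, LinearMap.comp_assoc]

variable [Coalgebra k C]

variable (k C g M ρ) in
def iterRedCoact (n : ℕ) : M →ₗ[k] Tp k C g n ⊗[k] M :=
  (Phi k C g n).rTensor M ∘ₗ ρ

theorem iterRedCoact_succ_apply
    (hcoassoc : ∀ m : M,
      (TensorProduct.assoc k C C M) ((LinearMap.rTensor M (Coalgebra.comul (R := k))) (ρ m))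
        = (LinearMap.lTensor C ρ) (ρ m)) (n : ℕ) (x : M) :
    iterRedCoact k C g M ρ (n + 1) x = (TensorProduct.assoc k _ _ M).symm
      ((iterRedCoact k C g M ρ n).lTensor _ (redCoact k C g M ρ x)) := by
  have hcomul : (Coalgebra.comul (R := k)).rTensor M (ρ x)
      = (TensorProduct.assoc k C C M).symm (ρ.lTensor C (ρ x)) := by
    rw [← hcoassoc, LinearEquiv.symm_apply_apply]
  rw [iterRedCoact, LinearMap.comp_apply]
  change ((TensorProduct.map _ _ ∘ₗ Coalgebra.comul).rTensor M) (ρ x) = _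
  rw [LinearMap.rTensor_comp_apply, hcomul, LinearMap.rTensor, TensorProduct.map_map_assoc_symm,
    ← LinearMap.comp_apply (TensorProduct.map _ _), LinearMap.map_comp_lTensor, redCoact,
    LinearMap.comp_apply, ← LinearMap.comp_apply (LinearMap.lTensor _ _),
    LinearMap.lTensor_comp_rTensor]
  rfl

end Comodule

section Descent

variable {k C : Type} [Field k] [AddCommGroup C] [Module k C] [Coalgebra k C] {g : C}
variable {M : Type} [AddCommGroup M] [Module k M] {ρ : M →ₗ[k] C ⊗[k] M}
variable {N : Type} [AddCommGroup N] [Module k N] {σ : N →ₗ[k] C ⊗[k] N} {f : M →ₗ[k] N}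

theorem ker_inf_ker_iterRedCoact_ne_bot_of_succ
    (hcoassoc : ∀ m : M,
      (TensorProduct.assoc k C C M) ((LinearMap.rTensor M (Coalgebra.comul (R := k))) (ρ m))
        = (LinearMap.lTensor C ρ) (ρ m))
    (hf : f.lTensor C ∘ₗ ρ = σ ∘ₗ f) {n : ℕ} {x : M} (hfx : f x = 0)
    (hx : iterRedCoact k C g M ρ (n + 1) x = 0) (hred : redCoact k C g M ρ x ≠ 0) :
    LinearMap.ker f ⊓ LinearMap.ker (iterRedCoact k C g M ρ n) ≠ ⊥ := by
  refine LinearMap.ker_inf_ker_ne_bot_of_lTensor hred ?_ ?_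
  · rw [← LinearMap.comp_apply, lTensor_comp_redCoact hf, LinearMap.comp_apply, hfx, map_zero]
  · rw [iterRedCoact_succ_apply hcoassoc] at hx
    exact (LinearEquiv.map_eq_zero_iff _).1 hx

theorem ker_inf_ker_redCoact_ne_bot_of_iterRedCoact
    (hcoassoc : ∀ m : M,
      (TensorProduct.assoc k C C M) ((LinearMap.rTensor M (Coalgebra.comul (R := k))) (ρ m))
        = (LinearMap.lTensor C ρ) (ρ m))
    (hf : f.lTensor C ∘ₗ ρ = σ ∘ₗ f) :
    ∀ n : ℕ, LinearMap.ker f ⊓ LinearMap.ker (iterRedCoact k C g M ρ n) ≠ ⊥ →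
      LinearMap.ker f ⊓ LinearMap.ker (redCoact k C g M ρ) ≠ ⊥
  | 0, h => h -- `Phi 0 = mkQ`, so `iterRedCoact 0` is `redCoact`
  | n + 1, h => by
    obtain ⟨x, ⟨hfx, hx⟩, hx0⟩ := (Submodule.ne_bot_iff _).1 h
    by_cases hred : redCoact k C g M ρ x = 0
    · exact (Submodule.ne_bot_iff _).2 ⟨x, ⟨hfx, hred⟩, hx0⟩
    · exact ker_inf_ker_redCoact_ne_bot_of_iterRedCoact hcoassoc hf n
        (ker_inf_ker_iterRedCoact_ne_bot_of_succ hcoassoc hf hfx hx hred)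

theorem ker_inf_ker_redCoact_ne_bot (hg1 : Coalgebra.comul (R := k) g = g ⊗ₜ[k] g)
    (hconil : ∀ c : C, ∃ m, Phi k C g m c = 0)
    (hcoassoc : ∀ m : M,
      (TensorProduct.assoc k C C M) ((LinearMap.rTensor M (Coalgebra.comul (R := k))) (ρ m))
        = (LinearMap.lTensor C ρ) (ρ m))
    (hf : f.lTensor C ∘ₗ ρ = σ ∘ₗ f) (hker : LinearMap.ker f ≠ ⊥) :
    LinearMap.ker f ⊓ LinearMap.ker (redCoact k C g M ρ) ≠ ⊥ := by
  obtain ⟨x, hfx, hx0⟩ := (Submodule.ne_bot_iff _).1 hker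
  obtain ⟨n, hn⟩ := (eventually_rTensor_Phi_eq_zero hg1 hconil (ρ x)).exists
  exact ker_inf_ker_redCoact_ne_bot_of_iterRedCoact hcoassoc hf n
    ((Submodule.ne_bot_iff _).2 ⟨x, ⟨hfx, hn⟩, hx0⟩)

end Descent

section Cofree

variable {k C : Type} [Field k] [AddCommGroup C] [Module k C] [Coalgebra k C] {g : C}

theorem coaction_eq_tmul_of_redCoact_eq_zero (hg2 : Coalgebra.counit (R := k) g = 1)
    {N : Type} [AddCommGroup N] [Module k N] {σ : N →ₗ[k] C ⊗[k] N}
    (hcounit : ∀ n : N,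
      (TensorProduct.lid k N) ((LinearMap.rTensor N (Coalgebra.counit (R := k))) (σ n)) = n)
    {n : N} (hn : redCoact k C g N σ n = 0) : σ n = g ⊗ₜ[k] n := by
  -- `c ↦ c - ε(c) g` kills `g`, hence factors through `C₊`
  set p : C →ₗ[k] C := LinearMap.id - LinearMap.toSpanSingleton k C g ∘ₗ Coalgebra.counit
  have hp : Caug k C g ≤ LinearMap.ker p := by
    rw [Caug, Submodule.span_singleton_le_iff_mem, LinearMap.mem_ker]
    simp [p, hg2]
  have hspan : (LinearMap.toSpanSingleton k C g).rTensor N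
      = TensorProduct.mk k C N g ∘ₗ (TensorProduct.lid k N).toLinearMap :=
    TensorProduct.ext' fun a x => by simp [TensorProduct.smul_tmul]
  have hzero : p.rTensor N (σ n) = 0 := by
    rw [← (Caug k C g).liftQ_mkQ p hp, LinearMap.rTensor_comp_apply]
    exact (congrArg _ hn).trans (map_zero _)
  rwa [LinearMap.rTensor_sub, LinearMap.rTensor_id, LinearMap.rTensor_comp, hspan,
    LinearMap.sub_apply, LinearMap.id_apply, LinearMap.comp_apply, LinearMap.comp_apply,
    LinearEquiv.coe_coe, hcounit, TensorProduct.mk_apply, sub_eq_zero] at hzero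

variable {U : Type} [AddCommGroup U] [Module k U]

theorem lid_rTensor_counit_cofreeCoact (w : C ⊗[k] U) :
    TensorProduct.lid k (C ⊗[k] U)
      ((Coalgebra.counit (R := k) (A := C)).rTensor (C ⊗[k] U) (cofreeCoact k C U w)) = w := by
  have hassoc : ((TensorProduct.lid k (C ⊗[k] U)).toLinearMap ∘ₗ
        (Coalgebra.counit (R := k) (A := C)).rTensor (C ⊗[k] U)) ∘ₗ
        (TensorProduct.assoc k C C U).toLinearMap
      = ((TensorProduct.lid k C).toLinearMap ∘ₗ
          (Coalgebra.counit (R := k) (A := C)).rTensor C).rTensor U :=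
    TensorProduct.ext_threefold fun a b u => by simp [TensorProduct.smul_tmul']
  rw [cofreeCoact, ← LinearEquiv.coe_coe, ← LinearMap.comp_apply, ← LinearMap.comp_apply,
    ← LinearMap.comp_assoc, hassoc, ← LinearMap.rTensor_comp, LinearMap.comp_assoc,
    Coalgebra.rTensor_counit_comp_comul,
    show (TensorProduct.lid k C).toLinearMap ∘ₗ TensorProduct.mk k k C 1 = LinearMap.id from
      LinearMap.ext fun c => by simp, LinearMap.rTensor_id_apply]

theorem lTensor_cofreeProj_cofreeCoact (w : C ⊗[k] U) :
    (cofreeProj k C U).lTensor C (cofreeCoact k C U w) = w := by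
  have hassoc : (cofreeProj k C U).lTensor C ∘ₗ (TensorProduct.assoc k C C U).toLinearMap
      = ((TensorProduct.rid k C).toLinearMap ∘ₗ
          (Coalgebra.counit (R := k) (A := C)).lTensor C).rTensor U :=
    TensorProduct.ext_threefold fun a b u => by simp [cofreeProj, TensorProduct.smul_tmul']
  rw [cofreeCoact, ← LinearMap.comp_apply, ← LinearMap.comp_assoc, hassoc,
    ← LinearMap.rTensor_comp, LinearMap.comp_assoc, Coalgebra.lTensor_counit_comp_comul,
    show (TensorProduct.rid k C).toLinearMap ∘ₗ (TensorProduct.mk k C k).flip 1 = .id from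
      LinearMap.ext fun c => by simp, LinearMap.rTensor_id_apply]

theorem eq_tmul_cofreeProj_of_redCoact_eq_zero (hg2 : Coalgebra.counit (R := k) g = 1)
    {w : C ⊗[k] U} (hw : redCoact k C g (C ⊗[k] U) (cofreeCoact k C U) w = 0) :
    w = g ⊗ₜ[k] cofreeProj k C U w := by
  have h := congrArg ((cofreeProj k C U).lTensor C)
    (coaction_eq_tmul_of_redCoact_eq_zero hg2 lid_rTensor_counit_cofreeCoact hw)
  rwa [lTensor_cofreeProj_cofreeCoact, LinearMap.lTensor_tmul] at h

end Cofree

theorem stmt_9_general (k C : Type) [Field k] [AddCommGroup C] [Module k C] [Coalgebra k C]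
    (g : C) (hg1 : Coalgebra.comul (R := k) g = g ⊗ₜ[k] g)
    (hg2 : Coalgebra.counit (R := k) g = 1)
    (hconil : ∀ c : C, ∃ m, Phi k C g m c = 0)
    (M : Type) [AddCommGroup M] [Module k M] (ρ : M →ₗ[k] C ⊗[k] M)
    (hcoassoc : ∀ m : M,
      (TensorProduct.assoc k C C M) ((LinearMap.rTensor M (Coalgebra.comul (R := k))) (ρ m))
        = (LinearMap.lTensor C ρ) (ρ m))
    (U : Type) [AddCommGroup U] [Module k U] (f : M →ₗ[k] C ⊗[k] U)
    (hf : (LinearMap.lTensor C f).comp ρ = (cofreeCoact k C U).comp f) :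
    Function.Injective f ↔
      Set.InjOn (fun m : M => cofreeProj k C U (f m))
        (LinearMap.ker (redCoact k C g M ρ)) := by
  have hH0 (m : M) (hm : m ∈ LinearMap.ker (redCoact k C g M ρ)) :
      f m = g ⊗ₜ[k] cofreeProj k C U (f m) :=
    eq_tmul_cofreeProj_of_redCoact_eq_zero hg2 <| by
      rw [← LinearMap.comp_apply, ← lTensor_comp_redCoact hf, LinearMap.comp_apply,
        LinearMap.mem_ker.1 hm, map_zero]
  refine ⟨fun hinj m₁ hm₁ m₂ hm₂ h => hinj ?_, fun hinj => ?_⟩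
  · rw [hH0 m₁ hm₁, hH0 m₂ hm₂]
    exact congrArg _ h
  · rw [← LinearMap.ker_eq_bot]
    by_contra hker
    obtain ⟨y, ⟨hfy, hy⟩, hy0⟩ :=
      (Submodule.ne_bot_iff _).1 (ker_inf_ker_redCoact_ne_bot hg1 hconil hcoassoc hf hker)
    exact hy0 (hinj hy (zero_mem _) (by simp [LinearMap.mem_ker.1 hfy]))

/-- Let `C` be a conilpotent coaugmented coalgebra over a field `k`, `M` a left
`C`-comodule, and `f : M → C ⊗ U` a morphism of left `C`-comodules into a cofree
comodule.  Then `f` is injective if and only if the induced map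
`H⁰(C, f) : H⁰(C, M) → H⁰(C, C ⊗ U) = U` is injective, i.e. if and only if the composite
`M → C ⊗ U → U` is injective on `H⁰(C, M) = ker (M → C₊ ⊗ M)`. -/
theorem stmt_9 (k C : Type) [Field k] [AddCommGroup C] [Module k C] [Coalgebra k C]
    (g : C) (hg1 : Coalgebra.comul (R := k) g = g ⊗ₜ[k] g)
    (hg2 : Coalgebra.counit (R := k) g = 1)
    (hconil : ∀ c : C, ∃ m, Phi k C g m c = 0)
    (M : Type) [AddCommGroup M] [Module k M] (ρ : M →ₗ[k] C ⊗[k] M)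
    (hcounit : ∀ m : M,
      (TensorProduct.lid k M) ((LinearMap.rTensor M (Coalgebra.counit (R := k))) (ρ m)) = m)
    (hcoassoc : ∀ m : M,
      (TensorProduct.assoc k C C M) ((LinearMap.rTensor M (Coalgebra.comul (R := k))) (ρ m))
        = (LinearMap.lTensor C ρ) (ρ m))
    (U : Type) [AddCommGroup U] [Module k U] (f : M →ₗ[k] C ⊗[k] U)
    (hf : (LinearMap.lTensor C f).comp ρ = (cofreeCoact k C U).comp f) :
    Function.Injective f ↔
      Set.InjOn (fun m : M => cofreeProj k C U (f m))
        (LinearMap.ker (redCoact k C g M ρ)) :=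
  stmt_9_general k C g hg1 hg2 hconil M ρ hcoassoc U f hf
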